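/- There is no n-dimensional nilpotent Lie algebra L with dim L² = n−2 (n ≥ 4) such that dim M(L) attains the bound (1/2)(n−m−1)(n+m) − Σ_{i=2}^{min(n−m,c)} (n−m−i) with m = n−2, i.e. such that dim M(L) = n−1. -/

import Mathlib

open Module

/-- The dimension of the Schur multiplier `M(L) = (R ∩ F²)/[R,F]` of a Lie algebra `L`,
computed from a free presentation `π : FreeLieAlgebra K X → L` (with `R = ker π` and
`F² = [F,F]`). -/
noncomputable def lieSchurMultiplierDim (K : Type) [Field K] (X : Type) {L : Type}
    [LieRing L] [LieAlgebra K L] (π : FreeLieAlgebra K X →ₗ⁅K⁆ L) : ℕ :=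
  let F := FreeLieAlgebra K X
  let R : LieIdeal K F := π.ker
  let F2 : LieIdeal K F := LieModule.lowerCentralSeries K F F 1
  Module.finrank K
    (↥((R ⊓ F2 : LieIdeal K F) : Submodule K F) ⧸
      (Submodule.comap ((R ⊓ F2 : LieIdeal K F) : Submodule K F).subtype
        ((⁅R, (⊤ : LieIdeal K F)⁆ : LieIdeal K F) : Submodule K F)))

/-- `L` is nilpotent of nilpotency class exactly `c`: in the paper's notation
`γ_{c+1}(L) = 0` and `γ_k(L) ≠ 0` for `k ≤ c` (Mathlib's `lowerCentralSeries` is indexed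
so that `γ_{k+1}(L) = lowerCentralSeries K L L k`). -/
def lieNilpotencyClass (K : Type) [Field K] (L : Type) [LieRing L] [LieAlgebra K L]
    (c : ℕ) : Prop :=
  LieModule.lowerCentralSeries K L L c = ⊥ ∧
    ∀ k < c, LieModule.lowerCentralSeries K L L k ≠ ⊥

/-- The dimension of the derived subalgebra `L² = [L,L]`. -/
noncomputable def lieDerivedDim (K : Type) [Field K] (L : Type) [LieRing L]
    [LieAlgebra K L] : ℕ :=
  Module.finrank K
    ↥((LieModule.lowerCentralSeries K L L 1 : LieSubmodule K L L) : Submodule K L)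

/-!
Everything is computed through Hopf's formula `M(L) = (R ∩ F²)/[R,F]`, for an arbitrary
presentation `π : F ↠ L`. Since `dim L/L² = 2`, `L` is generated modulo `L²` by two elements, and
we show `dim M(L) ≤ n - 2` by induction on `n`.

For `n ≥ 5` pick `0 ≠ z ∈ L²` central (possible as `L` is nilpotent) and a preimage `t ∈ F²`.
Passing from `L` to `L/Kz` adds `t` to the multiplier, while replacing `[R,F]` by `[R + Kt, F]`
kills at most the image of `[t,F]` in `F/[R,F]`, which is a quotient of `L/L²`. Hence
`dim M(L) ≤ dim M(L/Kz) + 1`.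

For `n = 4` we have `L⁴ = 0` and `dim L³ ≤ 1`. In the central extension `E = F/[R,F]` of `L`,
with `x, y` lifting generators, `E² = K[x,y] + E³`, `E³ = K[x,[x,y]] + K[y,[x,y]] + E⁴` and
`E⁵ = 0`. The map `w ↦ ([x,w], [y,w])` on `E³` factors through `L³`, so its images of `[x,[x,y]]`
and `[y,[x,y]]` are proportional; by Jacobi they share the entry `[y,[x,[x,y]]]`, which forces
`dim E⁴ ≤ 1`. Thus `dim E² ≤ 4` and `dim M(L) = dim E² - dim L² ≤ 2`.
-/

open Submodule LieModule

section LinearAlgebra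

variable {K V W : Type*} [Field K] [AddCommGroup V] [Module K V] [AddCommGroup W] [Module K W]

lemma finrank_quotient_comap_subtype_eq_finrank_map_mkQ (S N : Submodule K V) :
    finrank K (S ⧸ N.comap S.subtype) = finrank K (S.map N.mkQ) := by
  have hker : LinearMap.ker (N.mkQ ∘ₗ S.subtype) = N.comap S.subtype := by
    rw [LinearMap.ker_comp, ker_mkQ]
  have hrange : LinearMap.range (N.mkQ ∘ₗ S.subtype) = S.map N.mkQ := by
    rw [LinearMap.range_comp, range_subtype]
  rw [← hker, ← hrange]
  exact (N.mkQ ∘ₗ S.subtype).quotKerEquivRange.finrank_eq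

lemma map_mkQ_inf_of_le {N A : Submodule K V} (B : Submodule K V) (h : N ≤ A) :
    (A ⊓ B).map N.mkQ = A.map N.mkQ ⊓ B.map N.mkQ := by
  refine le_antisymm (map_inf_le _) ?_
  rintro _ ⟨⟨a, ha, hab⟩, ⟨b, hb, rfl⟩⟩
  have hba : b - a ∈ N := (Submodule.Quotient.eq N).mp hab.symm
  exact mem_map_of_mem ⟨by simpa using A.add_mem (h hba) ha, hb⟩

lemma finrank_map_add_finrank_inf_ker (f : V →ₗ[K] W) (S : Submodule K V)
    [FiniteDimensional K S] :
    finrank K (S.map f) + finrank K ↥(S ⊓ LinearMap.ker f) = finrank K S := by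
  have hrange : LinearMap.range (f ∘ₗ S.subtype) = S.map f := by
    rw [LinearMap.range_comp, range_subtype]
  have hker : LinearMap.ker (f ∘ₗ S.subtype) = (S ⊓ LinearMap.ker f).comap S.subtype := by
    rw [LinearMap.ker_comp, comap_inf, comap_subtype_self, top_inf_eq]
  rw [← (f ∘ₗ S.subtype).finrank_range_add_finrank_ker, hrange, hker,
    (comapSubtypeEquivOfLe inf_le_left).finrank_eq]

lemma finrank_sup_span_singleton_of_notMem {S : Submodule K V} [FiniteDimensional K S] {v : V}
    (hv : v ∉ S) : finrank K ↥(S ⊔ K ∙ v) = finrank K S + 1 := by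
  have hv0 : v ≠ 0 := fun h => hv (h ▸ S.zero_mem)
  have h := S.finrank_sup_add_finrank_inf_eq (K ∙ v)
  rwa [(disjoint_span_singleton_of_notMem hv).eq_bot, finrank_bot, add_zero,
    finrank_span_singleton hv0] at h

lemma finrank_map_mkQ_le_add {J J' : Submodule K V} (hJ : J ≤ J') (M : Submodule K V)
    [FiniteDimensional K (J'.map J.mkQ)] :
    finrank K (M.map J.mkQ) ≤ finrank K (M.map J'.mkQ) + finrank K (J'.map J.mkQ) := by
  by_cases hM : FiniteDimensional K (M.map J.mkQ)
  · have hmap : (M.map J.mkQ).map (factor hJ) = M.map J'.mkQ := by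
      rw [← map_comp, factor_comp_mk]
    have hker : LinearMap.ker (factor hJ) = J'.map J.mkQ := by
      rw [factor, ker_mapQ, comap_id]
    have h := finrank_map_add_finrank_inf_ker (factor hJ) (M.map J.mkQ)
    rw [hmap, hker] at h
    have := finrank_mono (inf_le_right : M.map J.mkQ ⊓ J'.map J.mkQ ≤ _)
    omega
  · rw [finrank_of_not_finite hM]
    exact Nat.zero_le _

section KerLe

variable {U : Type*} [AddCommGroup U] [Module K U] {f : V →ₗ[K] W} {g : V →ₗ[K] U}
  [FiniteDimensional K (LinearMap.range g)]

lemma finiteDimensional_range_of_ker_le (h : LinearMap.ker g ≤ LinearMap.ker f) :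
    FiniteDimensional K (LinearMap.range f) := by
  have := g.quotKerEquivRange.symm.finiteDimensional
  rw [← range_liftQ _ f h]
  infer_instance

lemma finrank_range_le_of_ker_le (h : LinearMap.ker g ≤ LinearMap.ker f) :
    finrank K (LinearMap.range f) ≤ finrank K (LinearMap.range g) := by
  have := g.quotKerEquivRange.symm.finiteDimensional
  rw [← range_liftQ _ f h, ← g.quotKerEquivRange.finrank_eq]
  exact LinearMap.finrank_range_le _

end KerLe

lemma finrank_le_card_add_of_le_span_sup {N W : Submodule K V} (s : Finset V)
    [FiniteDimensional K W] (h : N ≤ span K s ⊔ W) : finrank K N ≤ s.card + finrank K W :=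
  (finrank_mono h).trans <| (finrank_add_le_finrank_add_finrank _ _).trans <|
    Nat.add_le_add_right (finrank_span_finset_le_card s) _

lemma exists_top_le_span_pair_sup {W : Submodule K V} [FiniteDimensional K (V ⧸ W)]
    (h : finrank K (V ⧸ W) = 2) : ∃ a b : V, ⊤ ≤ span K {a, b} ⊔ W := by
  let β := Module.finBasisOfFinrankEq K (V ⧸ W) h
  obtain ⟨a, ha⟩ := W.mkQ_surjective (β 0)
  obtain ⟨b, hb⟩ := W.mkQ_surjective (β 1)
  refine ⟨a, b, ?_⟩
  rw [top_le_iff, sup_comm, ← map_mkQ_eq_top, map_span, Set.image_pair, ha, hb, ← β.span_eq]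
  congr
  ext
  simp [Fin.exists_fin_two, eq_comm]

lemma finrank_span_triple_le_one {P : Submodule K (V × V)} [FiniteDimensional K P]
    (hP : finrank K P ≤ 1) {e₁ e₂ e₃ : V} (h₁ : (e₁, e₂) ∈ P) (h₂ : (e₂, e₃) ∈ P) :
    finrank K (span K {e₁, e₂, e₃}) ≤ 1 := by
  suffices ∃ w : V, span K {e₁, e₂, e₃} ≤ K ∙ w by
    obtain ⟨w, hw⟩ := this
    exact (finrank_mono hw).trans ((finrank_span_le_card ({w} : Set V)).trans (by simp))
  obtain ⟨⟨⟨v₁, v₂⟩, _⟩, hv⟩ := finrank_le_one_iff.mp hP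
  obtain ⟨α, hα⟩ := hv ⟨_, h₁⟩
  obtain ⟨β, hβ⟩ := hv ⟨_, h₂⟩
  simp only [Subtype.ext_iff, SetLike.val_smul, Prod.smul_mk, Prod.mk.injEq] at hα hβ
  obtain ⟨rfl, rfl⟩ := hα
  obtain ⟨hαβ, rfl⟩ := hβ
  simp only [span_le, Set.insert_subset_iff, Set.singleton_subset_iff, SetLike.mem_coe,
    mem_span_singleton]
  rcases eq_or_ne α 0 with rfl | hα
  · exact ⟨β • v₂, ⟨0, by simp⟩, ⟨0, by simp⟩, ⟨1, one_smul _ _⟩⟩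
  · have hv₂ : v₂ = (α⁻¹ * β) • v₁ := by rw [mul_smul, hαβ, inv_smul_smul₀ hα]
    exact ⟨v₁, ⟨α, rfl⟩, ⟨β, hαβ⟩, ⟨β * (α⁻¹ * β), by rw [hv₂, smul_smul]⟩⟩

end LinearAlgebra

namespace LieIdeal

variable {K F L : Type*} [Field K] [LieRing F] [LieAlgebra K F] [LieRing L] [LieAlgebra K L]

def mkQ (I : LieIdeal K F) : F →ₗ⁅K⁆ F ⧸ I :=
  { I.toSubmodule.mkQ with map_lie' := rfl }

lemma coe_mkQ (I : LieIdeal K F) : (mkQ I : F →ₗ[K] F ⧸ I) = I.toSubmodule.mkQ :=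
  rfl

lemma mkQ_eq_zero {I : LieIdeal K F} {x : F} : mkQ I x = 0 ↔ x ∈ I :=
  Submodule.Quotient.mk_eq_zero _

lemma mkQ_surjective (I : LieIdeal K F) : Function.Surjective (mkQ I) :=
  Submodule.mkQ_surjective _

def liftQ (I : LieIdeal K F) (f : F →ₗ⁅K⁆ L) (h : I ≤ f.ker) : F ⧸ I →ₗ⁅K⁆ L :=
  { I.toSubmodule.liftQ f fun _ hx => LinearMap.mem_ker.mpr (LieHom.mem_ker.mp (h hx)) with
    map_lie' := by
      intro x y
      induction x using Submodule.Quotient.induction_on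
      induction y using Submodule.Quotient.induction_on
      exact f.map_lie _ _ }

lemma coe_ker_liftQ (I : LieIdeal K F) (f : F →ₗ⁅K⁆ L) (h : I ≤ f.ker) :
    (liftQ I f h).ker.toSubmodule = f.ker.toSubmodule.map I.toSubmodule.mkQ :=
  Submodule.ker_liftQ _ _ _

end LieIdeal

def centralLine {K L : Type*} [Field K] [LieRing L] [LieAlgebra K L] (z : L)
    (hz : z ∈ LieAlgebra.center K L) : LieIdeal K L :=
  { K ∙ z with
    lie_mem := fun {x _} hm => by
      obtain ⟨c, rfl⟩ := mem_span_singleton.mp hm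
      rw [lie_smul, (mem_maxTrivSubmodule K L L z).mp hz x, smul_zero]
      exact (K ∙ z).zero_mem }

section LowerCentralSeries

variable {K E L : Type*} [Field K] [LieRing E] [LieAlgebra K E] [LieRing L] [LieAlgebra K L]

lemma lie_mem_lowerCentralSeries_succ (x : E) {e : E} {k : ℕ}
    (he : e ∈ lowerCentralSeries K E E k) : ⁅x, e⁆ ∈ lowerCentralSeries K E E (k + 1) := by
  rw [lowerCentralSeries_succ]
  exact LieSubmodule.lie_mem_lie (LieSubmodule.mem_top x) he

lemma lie_mem_lowerCentralSeries_add {i j : ℕ} {e f : E} (he : e ∈ lowerCentralSeries K E E i)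
    (hf : f ∈ lowerCentralSeries K E E j) : ⁅e, f⁆ ∈ lowerCentralSeries K E E (i + j + 1) := by
  induction j generalizing i e f with
  | zero =>
    rw [← lie_skew]
    exact neg_mem (lie_mem_lowerCentralSeries_succ f he)
  | succ j ih =>
    rw [lowerCentralSeries_succ, ← LieSubmodule.mem_toSubmodule,
      LieSubmodule.lieIdeal_oper_eq_linear_span'] at hf
    induction hf using Submodule.span_induction with
    | mem _ h =>
      obtain ⟨x, -, f, hf, rfl⟩ := h
      rw [leibniz_lie]
      refine add_mem ?_ ?_
      · have h := ih (lie_mem_lowerCentralSeries_succ x he) hf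
        rw [← lie_skew e x, neg_lie, show i + (j + 1) + 1 = i + 1 + j + 1 by omega]
        exact neg_mem h
      · rw [show i + (j + 1) + 1 = i + j + 1 + 1 by omega]
        exact lie_mem_lowerCentralSeries_succ x (ih he hf)
    | zero => simp
    | add _ _ _ _ h₁ h₂ => rw [lie_add]; exact add_mem h₁ h₂
    | smul c _ _ h => rw [lie_smul]; exact Submodule.smul_mem _ c h

lemma coe_lowerCentralSeries_eq_map {f : E →ₗ⁅K⁆ L} (hf : Function.Surjective f) (k : ℕ) :
    (lowerCentralSeries K L L k).toSubmodule =
      (lowerCentralSeries K E E k).toSubmodule.map (f : E →ₗ[K] L) := by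
  rw [← LieIdeal.coe_map_of_surjective hf, LieIdeal.lowerCentralSeries_map_eq k hf]

lemma lie_mem_span_image2 {S T : Set E} {s t : E} (hs : s ∈ span K S) (ht : t ∈ span K T) :
    ⁅s, t⁆ ∈ span K (Set.image2 (fun a b => ⁅a, b⁆) S T) := by
  simpa [map₂_span_span] using apply_mem_map₂ (LieAlgebra.ad K E : E →ₗ[K] Module.End K E) hs ht

lemma lowerCentralSeries_succ_le_span_image2_sup {C : LieIdeal K E}
    (hC : C ≤ LieAlgebra.center K E) {S T : Set E} {k : ℕ}
    (hS : ⊤ ≤ span K S ⊔ (lowerCentralSeries K E E 1).toSubmodule ⊔ C.toSubmodule)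
    (hT : (lowerCentralSeries K E E k).toSubmodule ≤
      span K T ⊔ (lowerCentralSeries K E E (k + 1)).toSubmodule ⊔ C.toSubmodule) :
    (lowerCentralSeries K E E (k + 1)).toSubmodule ≤
      span K (Set.image2 (fun a b => ⁅a, b⁆) S T) ⊔
        (lowerCentralSeries K E E (k + 2)).toSubmodule := by
  have hcentral : ∀ c ∈ C, ∀ e : E, ⁅e, c⁆ = 0 := fun c hc =>
    (mem_maxTrivSubmodule K E E c).mp (hC hc)
  rw [lowerCentralSeries_succ, LieSubmodule.lieIdeal_oper_eq_linear_span', span_le]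
  rintro _ ⟨u, -, w, hw, rfl⟩
  obtain ⟨_, hsg, c, hc, rfl⟩ := mem_sup.mp (hS (mem_top (x := u)))
  obtain ⟨s, hs, g, hg, rfl⟩ := mem_sup.mp hsg
  obtain ⟨_, hth, c', hc', rfl⟩ := mem_sup.mp (hT hw)
  obtain ⟨t, ht, h, hh, rfl⟩ := mem_sup.mp hth
  have hgw : ⁅g, t + h + c'⁆ ∈ lowerCentralSeries K E E (k + 2) := by
    rw [show k + 2 = 1 + k + 1 by omega]
    exact lie_mem_lowerCentralSeries_add hg hw
  rw [add_lie, add_lie, ← lie_skew c, hcentral c hc, neg_zero, add_zero, lie_add, lie_add,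
    hcentral c' hc', add_zero, add_assoc]
  exact add_mem (mem_sup_left (lie_mem_span_image2 hs ht))
    (mem_sup_right (add_mem (lie_mem_lowerCentralSeries_succ s hh) hgw))

lemma finrank_lowerCentralSeries_one_quotient_add [FiniteDimensional K L] {Z : LieIdeal K L}
    (hZ : Z ≤ lowerCentralSeries K L L 1) :
    finrank K (lowerCentralSeries K (L ⧸ Z) (L ⧸ Z) 1).toSubmodule + finrank K Z.toSubmodule =
      finrank K (lowerCentralSeries K L L 1).toSubmodule := by
  have h := finrank_map_add_finrank_inf_ker Z.toSubmodule.mkQ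
    (lowerCentralSeries K L L 1).toSubmodule
  rwa [ker_mkQ, inf_eq_right.mpr (show Z.toSubmodule ≤ _ from hZ), ← LieIdeal.coe_mkQ,
    ← coe_lowerCentralSeries_eq_map (LieIdeal.mkQ_surjective Z)] at h

end LowerCentralSeries

section Nilpotent

variable {K L : Type*} [Field K] [LieRing L] [LieAlgebra K L] [LieRing.IsNilpotent L]

lemma lowerCentralSeries_succ_ne {k : ℕ} (hk : lowerCentralSeries K L L k ≠ ⊥) :
    lowerCentralSeries K L L (k + 1) ≠ lowerCentralSeries K L L k := by
  intro h
  have hconst : ∀ j, lowerCentralSeries K L L (k + j) = lowerCentralSeries K L L k := by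
    intro j
    induction j with
    | zero => rfl
    | succ j ih => rw [← add_assoc, lowerCentralSeries_succ, ih, ← lowerCentralSeries_succ, h]
  obtain ⟨m, hm⟩ := IsNilpotent.nilpotent K L L
  apply hk
  rw [← hconst m, eq_bot_iff, ← hm]
  exact antitone_lowerCentralSeries K L L (Nat.le_add_left m k)

lemma exists_mem_lowerCentralSeries_one_mem_center_ne_zero
    (h : lowerCentralSeries K L L 1 ≠ ⊥) :
    ∃ z ∈ lowerCentralSeries K L L 1, z ∈ LieAlgebra.center K L ∧ z ≠ 0 := by
  have hnd : ¬ Disjoint (lowerCentralSeries K L L 1) (LieAlgebra.center K L) := by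
    rwa [LieAlgebra.center, disjoint_lowerCentralSeries_maxTrivSubmodule_iff K L L,
      trivial_iff_lower_central_eq_bot K L L]
  rw [← LieSubmodule.disjoint_toSubmodule, Submodule.disjoint_def] at hnd
  push Not at hnd
  exact hnd

variable [FiniteDimensional K L]

lemma finrank_lowerCentralSeries_succ_lt {k : ℕ} (hk : lowerCentralSeries K L L k ≠ ⊥) :
    finrank K (lowerCentralSeries K L L (k + 1)).toSubmodule <
      finrank K (lowerCentralSeries K L L k).toSubmodule := by
  refine finrank_lt_finrank_of_lt (lt_of_le_of_ne ?_ ?_)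
  · exact antitone_lowerCentralSeries K L L (Nat.le_succ k)
  · rw [Ne, LieSubmodule.toSubmodule_inj]
    exact lowerCentralSeries_succ_ne hk

lemma lowerCentralSeries_eq_bot_of_finrank_le {k j : ℕ}
    (h : finrank K (lowerCentralSeries K L L k).toSubmodule ≤ j) :
    lowerCentralSeries K L L (k + j) = ⊥ := by
  induction j generalizing k with
  | zero => rwa [Nat.le_zero, finrank_eq_zero, LieSubmodule.toSubmodule_eq_bot] at h
  | succ j ih =>
    by_cases hk : lowerCentralSeries K L L k = ⊥
    · rw [eq_bot_iff, ← hk]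
      exact antitone_lowerCentralSeries K L L (Nat.le_add_right k _)
    · rw [← add_assoc, add_right_comm]
      exact ih (by have := finrank_lowerCentralSeries_succ_lt hk; omega)

end Nilpotent

section CentralExtension

variable {K E L : Type*} [Field K] [LieRing E] [LieAlgebra K E] [LieRing L] [LieAlgebra K L]

lemma lowerCentralSeries_succ_eq_bot_of_ker_le_center {p : E →ₗ⁅K⁆ L}
    (hp : Function.Surjective p) (hcent : p.ker ≤ LieAlgebra.center K E) {k : ℕ}
    (hk : lowerCentralSeries K L L k = ⊥) : lowerCentralSeries K E E (k + 1) = ⊥ := by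
  have hker : lowerCentralSeries K E E k ≤ p.ker := by
    rw [← LieIdeal.map_eq_bot_iff, LieIdeal.lowerCentralSeries_map_eq k hp, hk]
  rw [lowerCentralSeries_succ, LieSubmodule.lie_eq_bot_iff]
  intro x _ m hm
  exact (mem_maxTrivSubmodule K E E m).mp (hcent (hker hm)) x

lemma top_le_span_sup_lowerCentralSeries_one_sup_ker {p : E →ₗ⁅K⁆ L}
    (hp : Function.Surjective p) {S : Set E}
    (hS : ⊤ ≤ span K (p '' S) ⊔ (lowerCentralSeries K L L 1).toSubmodule) :
    ⊤ ≤ span K S ⊔ (lowerCentralSeries K E E 1).toSubmodule ⊔ p.ker.toSubmodule := by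
  have hmap : span K (p '' S) ⊔ (lowerCentralSeries K L L 1).toSubmodule =
      (span K S ⊔ (lowerCentralSeries K E E 1).toSubmodule).map (p : E →ₗ[K] L) := by
    rw [Submodule.map_sup, map_span, coe_lowerCentralSeries_eq_map hp]
    rfl
  intro x _
  have hx : (p : E →ₗ[K] L) x ∈ _ := hS mem_top
  rwa [hmap, ← mem_comap, comap_map_eq, ← LieHom.ker_toSubmodule] at hx

section TwoGenerated

variable {C : LieIdeal K E} {x y : E}

lemma lowerCentralSeries_one_le_span_sup (hC : C ≤ LieAlgebra.center K E)
    (hgen : ⊤ ≤ span K {x, y} ⊔ (lowerCentralSeries K E E 1).toSubmodule ⊔ C.toSubmodule) :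
    (lowerCentralSeries K E E 1).toSubmodule ≤
      K ∙ ⁅x, y⁆ ⊔ (lowerCentralSeries K E E 2).toSubmodule := by
  refine (lowerCentralSeries_succ_le_span_image2_sup hC hgen (k := 0)
    fun _ _ => hgen mem_top).trans (sup_le_sup_right (span_le.mpr ?_) _)
  rintro _ ⟨s, hs, t, ht, rfl⟩
  dsimp only
  simp only [Set.mem_insert_iff, Set.mem_singleton_iff] at hs ht
  rcases hs with rfl | rfl <;> rcases ht with rfl | rfl
  · simp
  · exact mem_span_singleton_self _
  · rw [SetLike.mem_coe, ← neg_mem_iff, lie_skew]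
    exact mem_span_singleton_self _
  · simp

lemma lowerCentralSeries_two_le_span_sup (hC : C ≤ LieAlgebra.center K E)
    (hgen : ⊤ ≤ span K {x, y} ⊔ (lowerCentralSeries K E E 1).toSubmodule ⊔ C.toSubmodule) :
    (lowerCentralSeries K E E 2).toSubmodule ≤
      span K {⁅x, ⁅x, y⁆⁆, ⁅y, ⁅x, y⁆⁆} ⊔ (lowerCentralSeries K E E 3).toSubmodule := by
  refine (lowerCentralSeries_succ_le_span_image2_sup hC hgen (k := 1)
    ((lowerCentralSeries_one_le_span_sup hC hgen).trans le_sup_left)).trans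
      (sup_le_sup_right (span_le.mpr ?_) _)
  rintro _ ⟨s, hs, t, ht, rfl⟩
  simp only [Set.mem_insert_iff, Set.mem_singleton_iff] at hs ht
  rcases hs with rfl | rfl <;> subst ht <;> exact subset_span (by simp)

lemma lowerCentralSeries_three_le_span_sup (hC : C ≤ LieAlgebra.center K E)
    (hgen : ⊤ ≤ span K {x, y} ⊔ (lowerCentralSeries K E E 1).toSubmodule ⊔ C.toSubmodule) :
    (lowerCentralSeries K E E 3).toSubmodule ≤
      span K {⁅x, ⁅x, ⁅x, y⁆⁆⁆, ⁅y, ⁅x, ⁅x, y⁆⁆⁆, ⁅y, ⁅y, ⁅x, y⁆⁆⁆} ⊔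
        (lowerCentralSeries K E E 4).toSubmodule := by
  have hjacobi : ⁅x, ⁅y, ⁅x, y⁆⁆⁆ = ⁅y, ⁅x, ⁅x, y⁆⁆⁆ := by
    rw [leibniz_lie, lie_self, zero_add]
  refine (lowerCentralSeries_succ_le_span_image2_sup hC hgen (k := 2)
    ((lowerCentralSeries_two_le_span_sup hC hgen).trans le_sup_left)).trans
      (sup_le_sup_right (span_le.mpr ?_) _)
  rintro _ ⟨s, hs, t, ht, rfl⟩
  simp only [Set.mem_insert_iff, Set.mem_singleton_iff] at hs ht
  rcases hs with rfl | rfl <;> rcases ht with rfl | rfl <;> exact subset_span (by simp [hjacobi])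

end TwoGenerated

lemma finrank_span_le_one_of_ker_le_center [FiniteDimensional K L] {p : E →ₗ⁅K⁆ L}
    (hp : Function.Surjective p) (hcent : p.ker ≤ LieAlgebra.center K E)
    (hL3 : finrank K (lowerCentralSeries K L L 2).toSubmodule ≤ 1) (x y : E) :
    finrank K (span K {⁅x, ⁅x, ⁅x, y⁆⁆⁆, ⁅y, ⁅x, ⁅x, y⁆⁆⁆, ⁅y, ⁅y, ⁅x, y⁆⁆⁆}) ≤ 1 := by
  set E3 := (lowerCentralSeries K E E 2).toSubmodule
  let ad₂ : E →ₗ[K] E × E := (LieAlgebra.ad K E x : E →ₗ[K] E).prod (LieAlgebra.ad K E y)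
  have hker :
      LinearMap.ker ((p : E →ₗ[K] L) ∘ₗ E3.subtype) ≤ LinearMap.ker (ad₂ ∘ₗ E3.subtype) := by
    rintro ⟨w, _⟩ hw
    replace hw : w ∈ p.ker := hw
    simp [ad₂, (mem_maxTrivSubmodule K E E w).mp (hcent hw)]
  have hrange : LinearMap.range ((p : E →ₗ[K] L) ∘ₗ E3.subtype) =
      (lowerCentralSeries K L L 2).toSubmodule := by
    rw [LinearMap.range_comp, range_subtype, coe_lowerCentralSeries_eq_map hp]
  have := finiteDimensional_range_of_ker_le hker
  have hrank := finrank_range_le_of_ker_le hker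
  rw [hrange] at hrank
  have hu : ⁅x, y⁆ ∈ lowerCentralSeries K E E 1 :=
    lie_mem_lowerCentralSeries_succ x (LieSubmodule.mem_top y)
  refine finrank_span_triple_le_one (hrank.trans hL3)
    ⟨⟨_, lie_mem_lowerCentralSeries_succ x hu⟩, rfl⟩
    ⟨⟨_, lie_mem_lowerCentralSeries_succ y hu⟩, ?_⟩
  simp [ad₂, leibniz_lie x y ⁅x, y⁆]

theorem finrank_ker_inf_lowerCentralSeries_one_le_two [FiniteDimensional K L]
    [LieRing.IsNilpotent L] {p : E →ₗ⁅K⁆ L} (hp : Function.Surjective p)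
    (hcent : p.ker ≤ LieAlgebra.center K E) (hL : finrank K L = 4)
    (hL2 : finrank K (lowerCentralSeries K L L 1).toSubmodule = 2) :
    finrank K ↥(p.ker.toSubmodule ⊓ (lowerCentralSeries K E E 1).toSubmodule) ≤ 2 := by
  classical
  have hL2ne : lowerCentralSeries K L L 1 ≠ ⊥ := by
    rw [Ne, ← LieSubmodule.toSubmodule_eq_bot, ← finrank_eq_zero]
    omega
  have hL3 : finrank K (lowerCentralSeries K L L 2).toSubmodule ≤ 1 := by
    have h := finrank_lowerCentralSeries_succ_lt hL2ne
    rw [hL2] at h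
    exact Nat.lt_succ_iff.mp h
  have hE5 : lowerCentralSeries K E E 4 = ⊥ := lowerCentralSeries_succ_eq_bot_of_ker_le_center
    hp hcent (lowerCentralSeries_eq_bot_of_finrank_le hL2.le)
  obtain ⟨a, b, hab⟩ := exists_top_le_span_pair_sup (W := (lowerCentralSeries K L L 1).toSubmodule)
    (by have := (lowerCentralSeries K L L 1).toSubmodule.finrank_quotient_add_finrank; omega)
  obtain ⟨x, rfl⟩ := hp a
  obtain ⟨y, rfl⟩ := hp b
  have hgen := top_le_span_sup_lowerCentralSeries_one_sup_ker hp (S := {x, y})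
    (by rwa [Set.image_pair])
  have h4 := lowerCentralSeries_three_le_span_sup hcent hgen
  rw [hE5, LieSubmodule.bot_toSubmodule, sup_bot_eq] at h4
  have h3 := lowerCentralSeries_two_le_span_sup hcent hgen
  rw [← Finset.coe_pair] at h3
  have h2 := lowerCentralSeries_one_le_span_sup hcent hgen
  rw [← Finset.coe_singleton] at h2
  have : FiniteDimensional K (span K {⁅x, ⁅x, ⁅x, y⁆⁆⁆, ⁅y, ⁅x, ⁅x, y⁆⁆⁆, ⁅y, ⁅y, ⁅x, y⁆⁆⁆}) :=
    Module.Finite.span_of_finite K (Set.toFinite _)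
  have : FiniteDimensional K (lowerCentralSeries K E E 3).toSubmodule := finiteDimensional_of_le h4
  have : FiniteDimensional K (lowerCentralSeries K E E 2).toSubmodule := finiteDimensional_of_le h3
  have : FiniteDimensional K (lowerCentralSeries K E E 1).toSubmodule := finiteDimensional_of_le h2
  have d4 := (finrank_mono h4).trans (finrank_span_le_one_of_ker_le_center hp hcent hL3 x y)
  have d3 := (finrank_le_card_add_of_le_span_sup _ h3).trans
    (Nat.add_le_add_right Finset.card_le_two _)
  have d2 := finrank_le_card_add_of_le_span_sup _ h2
  rw [Finset.card_singleton] at d2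
  have hsplit := finrank_map_add_finrank_inf_ker (p : E →ₗ[K] L)
    (lowerCentralSeries K E E 1).toSubmodule
  rw [← coe_lowerCentralSeries_eq_map hp, hL2, inf_comm, ← LieHom.ker_toSubmodule] at hsplit
  omega

end CentralExtension

section Hopf

variable {K F L : Type*} [Field K] [LieRing F] [LieAlgebra K F] [LieRing L] [LieAlgebra K L]

noncomputable def hopfDim (π : F →ₗ⁅K⁆ L) : ℕ :=
  finrank K ((π.ker ⊓ lowerCentralSeries K F F 1).toSubmodule.map
    (⁅π.ker, ⊤⁆ : LieIdeal K F).toSubmodule.mkQ)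

lemma lieSchurMultiplierDim_eq_hopfDim {K X L : Type} [Field K] [LieRing L] [LieAlgebra K L]
    (π : FreeLieAlgebra K X →ₗ⁅K⁆ L) : lieSchurMultiplierDim K X π = hopfDim π :=
  finrank_quotient_comap_subtype_eq_finrank_map_mkQ _ _

lemma ker_liftQ_lie_ker_top_le_center (π : F →ₗ⁅K⁆ L) :
    (LieIdeal.liftQ ⁅π.ker, ⊤⁆ π (LieSubmodule.lie_le_left _ _)).ker ≤
      LieAlgebra.center K (F ⧸ ⁅π.ker, (⊤ : LieIdeal K F)⁆) := by
  intro e he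
  replace he : e ∈ (LieIdeal.liftQ ⁅π.ker, ⊤⁆ π (LieSubmodule.lie_le_left _ _)).ker.toSubmodule :=
    he
  rw [LieIdeal.coe_ker_liftQ] at he
  obtain ⟨r, hr, rfl⟩ := he
  rw [mem_maxTrivSubmodule]
  intro x
  obtain ⟨f, rfl⟩ := LieIdeal.mkQ_surjective _ x
  change ⁅LieIdeal.mkQ _ f, LieIdeal.mkQ _ r⁆ = 0
  rw [← LieHom.map_lie, LieIdeal.mkQ_eq_zero, ← lie_skew]
  exact neg_mem (LieSubmodule.lie_mem_lie hr (LieSubmodule.mem_top f))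

lemma hopfDim_eq_finrank_ker_liftQ_inf (π : F →ₗ⁅K⁆ L) :
    hopfDim π = finrank K
      ↥((LieIdeal.liftQ ⁅π.ker, ⊤⁆ π (LieSubmodule.lie_le_left _ _)).ker.toSubmodule ⊓
        (lowerCentralSeries K (F ⧸ ⁅π.ker, (⊤ : LieIdeal K F)⁆)
          (F ⧸ ⁅π.ker, (⊤ : LieIdeal K F)⁆) 1).toSubmodule) := by
  rw [hopfDim, LieIdeal.coe_ker_liftQ, coe_lowerCentralSeries_eq_map (LieIdeal.mkQ_surjective _),
    LieIdeal.coe_mkQ, ← map_mkQ_inf_of_le _ (LieSubmodule.lie_le_left _ _),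
    LieSubmodule.inf_toSubmodule]
  rfl

theorem hopfDim_le_two [FiniteDimensional K L] [LieRing.IsNilpotent L] {π : F →ₗ⁅K⁆ L}
    (hπ : Function.Surjective π) (hL : finrank K L = 4)
    (hL2 : finrank K (lowerCentralSeries K L L 1).toSubmodule = 2) : hopfDim π ≤ 2 := by
  rw [hopfDim_eq_finrank_ker_liftQ_inf]
  refine finrank_ker_inf_lowerCentralSeries_one_le_two ?_ (ker_liftQ_lie_ker_top_le_center π) hL hL2
  intro l
  obtain ⟨f, rfl⟩ := hπ l
  exact ⟨LieIdeal.mkQ _ f, rfl⟩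

section ExtraRelation

variable {π : F →ₗ⁅K⁆ L} {t : F}

lemma map_mkQ_lie_top_le_range {T : LieIdeal K F} (hT : ∀ f ∈ T, ∃ c : K, f - c • t ∈ π.ker) :
    (⁅T, ⊤⁆ : LieIdeal K F).toSubmodule.map (⁅π.ker, ⊤⁆ : LieIdeal K F).toSubmodule.mkQ ≤
      LinearMap.range
        ((⁅π.ker, ⊤⁆ : LieIdeal K F).toSubmodule.mkQ ∘ₗ (LieAlgebra.ad K F t : F →ₗ[K] F)) := by
  rw [LieSubmodule.lieIdeal_oper_eq_linear_span' ⊤ T, map_span, span_le]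
  rintro _ ⟨_, ⟨a, ha, b, -, rfl⟩, rfl⟩
  obtain ⟨c, hc⟩ := hT a ha
  refine ⟨c • b, (Submodule.Quotient.eq _).mpr ?_⟩
  have h := LieSubmodule.lie_mem_lie hc (LieSubmodule.mem_top b)
  rw [sub_lie, smul_lie] at h
  have : ⁅t, c • b⁆ - ⁅a, b⁆ = -(⁅a, b⁆ - c • ⁅t, b⁆) := by rw [lie_smul]; abel
  change ⁅t, c • b⁆ - ⁅a, b⁆ ∈ (⁅π.ker, ⊤⁆ : LieIdeal K F)
  rw [this]
  exact neg_mem h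

lemma ker_mkQ_comp_le_ker_mkQ_comp_ad (hπ : Function.Surjective π) (ht : ∀ f, ⁅t, f⁆ ∈ π.ker) :
    LinearMap.ker ((lowerCentralSeries K L L 1).toSubmodule.mkQ ∘ₗ (π : F →ₗ[K] L)) ≤
      LinearMap.ker
        ((⁅π.ker, ⊤⁆ : LieIdeal K F).toSubmodule.mkQ ∘ₗ (LieAlgebra.ad K F t : F →ₗ[K] F)) := by
  have hJ : ∀ r ∈ π.ker, ∀ f, ⁅f, r⁆ ∈ (⁅π.ker, ⊤⁆ : LieIdeal K F) := fun r hr f => by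
    rw [← lie_skew]
    exact neg_mem (LieSubmodule.lie_mem_lie hr (LieSubmodule.mem_top f))
  rw [LinearMap.ker_comp, ker_mkQ, coe_lowerCentralSeries_eq_map hπ, comap_map_eq]
  refine sup_le ?_ fun r hr => (Submodule.Quotient.mk_eq_zero _).mpr
    (hJ r (LieHom.mem_ker.mpr (LinearMap.mem_ker.mp hr)) t)
  rw [lowerCentralSeries_succ, LieSubmodule.lieIdeal_oper_eq_linear_span', span_le]
  rintro _ ⟨a, -, b, -, rfl⟩
  refine (Submodule.Quotient.mk_eq_zero _).mpr ?_
  change ⁅t, ⁅a, b⁆⁆ ∈ (⁅π.ker, ⊤⁆ : LieIdeal K F)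
  rw [leibniz_lie, ← lie_skew a]
  exact add_mem (LieSubmodule.lie_mem_lie (ht a) (LieSubmodule.mem_top b))
    (neg_mem (LieSubmodule.lie_mem_lie (ht b) (LieSubmodule.mem_top a)))

lemma coe_inf_lowerCentralSeries_one_eq_sup {T : LieIdeal K F} (hRT : π.ker ≤ T) (htT : t ∈ T)
    (ht1 : t ∈ lowerCentralSeries K F F 1) (hT : ∀ f ∈ T, ∃ c : K, f - c • t ∈ π.ker) :
    (T ⊓ lowerCentralSeries K F F 1).toSubmodule =
      (π.ker ⊓ lowerCentralSeries K F F 1).toSubmodule ⊔ K ∙ t := by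
  refine le_antisymm (fun f hf => ?_) (sup_le (fun f hf => ⟨hRT hf.1, hf.2⟩) ?_)
  · obtain ⟨c, hc⟩ := hT f hf.1
    have hmem : f - c • t ∈ (π.ker ⊓ lowerCentralSeries K F F 1).toSubmodule :=
      ⟨hc, sub_mem hf.2 (smul_mem _ c ht1)⟩
    rw [← sub_add_cancel f (c • t)]
    exact add_mem (mem_sup_left hmem) (mem_sup_right (smul_mem _ c (mem_span_singleton_self t)))
  · rw [span_singleton_le_iff_mem]
    exact ⟨htT, ht1⟩

/-- Here `π'` imposes exactly one more relation `t`, central modulo `ker π`. -/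
theorem hopfDim_le_hopfDim_add_finrank_sub_one [FiniteDimensional K L] {L' : Type*} [LieRing L']
    [LieAlgebra K L'] {π' : F →ₗ⁅K⁆ L'} (hπ : Function.Surjective π) (hRT : π.ker ≤ π'.ker)
    (hJT : ⁅π'.ker, ⊤⁆ ≤ π.ker) (htT : t ∈ π'.ker) (ht1 : t ∈ lowerCentralSeries K F F 1)
    (htR : t ∉ π.ker) (hT : ∀ f ∈ π'.ker, ∃ c : K, f - c • t ∈ π.ker) :
    hopfDim π ≤ hopfDim π' + finrank K (L ⧸ (lowerCentralSeries K L L 1).toSubmodule) - 1 := by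
  set M := (π.ker ⊓ lowerCentralSeries K F F 1).toSubmodule
  set J := (⁅π.ker, ⊤⁆ : LieIdeal K F).toSubmodule
  set JT := (⁅π'.ker, ⊤⁆ : LieIdeal K F).toSubmodule
  by_cases hfin : FiniteDimensional K (M.map J.mkQ)
  swap
  · rw [hopfDim, finrank_of_not_finite hfin]
    exact Nat.zero_le _
  have hJ : J ≤ JT := LieSubmodule.mono_lie hRT le_rfl
  have ht : ∀ f, ⁅t, f⁆ ∈ π.ker := fun f =>
    hJT (LieSubmodule.lie_mem_lie htT (LieSubmodule.mem_top f))
  have hker := ker_mkQ_comp_le_ker_mkQ_comp_ad hπ ht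
  have hrange : JT.map J.mkQ ≤ _ := map_mkQ_lie_top_le_range hT
  have := finiteDimensional_range_of_ker_le hker
  have : FiniteDimensional K (JT.map J.mkQ) := finiteDimensional_of_le hrange
  have hJT_le :
      finrank K (JT.map J.mkQ) ≤ finrank K (L ⧸ (lowerCentralSeries K L L 1).toSubmodule) :=
    (finrank_mono hrange).trans ((finrank_range_le_of_ker_le hker).trans (finrank_le _))
  have : FiniteDimensional K (M.map JT.mkQ) := by
    have h := Module.Finite.map (M.map J.mkQ) (factor hJ)
    rwa [← map_comp, factor_comp_mk] at h
  have htM : JT.mkQ t ∉ M.map JT.mkQ := by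
    rintro ⟨m, hm, hmt⟩
    have h : t - m ∈ π.ker := hJT ((Submodule.Quotient.eq _).mp hmt.symm)
    exact htR (by simpa using add_mem h hm.1)
  have hdim' : hopfDim π' = finrank K (M.map JT.mkQ) + 1 := by
    rw [hopfDim, coe_inf_lowerCentralSeries_one_eq_sup hRT htT ht1 hT, Submodule.map_sup,
      map_span, Set.image_singleton, finrank_sup_span_singleton_of_notMem htM]
  have hle : finrank K (M.map J.mkQ) ≤ finrank K (M.map JT.mkQ) + finrank K (JT.map J.mkQ) :=
    finrank_map_mkQ_le_add hJ M
  change finrank K (M.map J.mkQ) ≤ _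
  omega

end ExtraRelation

theorem hopfDim_le_hopfDim_comp_centralLine [FiniteDimensional K L] {π : F →ₗ⁅K⁆ L}
    (hπ : Function.Surjective π) {z : L} (hz : z ∈ LieAlgebra.center K L)
    (hz1 : z ∈ lowerCentralSeries K L L 1) (hz0 : z ≠ 0) :
    hopfDim π ≤ hopfDim ((LieIdeal.mkQ (centralLine z hz)).comp π) +
      finrank K (L ⧸ (lowerCentralSeries K L L 1).toSubmodule) - 1 := by
  have hT : ∀ f, f ∈ ((LieIdeal.mkQ (centralLine z hz)).comp π).ker ↔ π f ∈ K ∙ z := fun f => by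
    rw [LieHom.mem_ker, LieHom.comp_apply, LieIdeal.mkQ_eq_zero]
    rfl
  have hz1' : z ∈ (lowerCentralSeries K L L 1).toSubmodule := hz1
  rw [coe_lowerCentralSeries_eq_map hπ] at hz1'
  obtain ⟨t, ht1, ht⟩ := hz1'
  replace ht : π t = z := ht
  refine hopfDim_le_hopfDim_add_finrank_sub_one hπ (fun f hf => (hT f).mpr ?_) ?_
    ((hT t).mpr ?_) ht1 ?_ fun f hf => ?_
  · rw [LieHom.mem_ker.mp hf]
    exact zero_mem _
  · rw [LieSubmodule.lie_le_iff]
    intro a ha b _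
    obtain ⟨c, hc⟩ := mem_span_singleton.mp ((hT a).mp ha)
    rw [LieHom.mem_ker, LieHom.map_lie, ← hc, smul_lie, ← lie_skew,
      (mem_maxTrivSubmodule K L L z).mp hz, neg_zero, smul_zero]
  · rw [ht]
    exact mem_span_singleton_self z
  · rwa [LieHom.mem_ker, ht]
  · obtain ⟨c, hc⟩ := mem_span_singleton.mp ((hT f).mp hf)
    exact ⟨c, by rw [LieHom.mem_ker, map_sub, map_smul, ht, hc, sub_self]⟩

theorem hopfDim_le_finrank_lowerCentralSeries_one [FiniteDimensional K L] [LieRing.IsNilpotent L]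
    {π : F →ₗ⁅K⁆ L} (hπ : Function.Surjective π)
    (h2 : 2 ≤ finrank K (lowerCentralSeries K L L 1).toSubmodule)
    (hL : finrank K L = finrank K (lowerCentralSeries K L L 1).toSubmodule + 2) :
    hopfDim π ≤ finrank K (lowerCentralSeries K L L 1).toSubmodule := by
  obtain ⟨d, hd⟩ : ∃ d, finrank K (lowerCentralSeries K L L 1).toSubmodule = d := ⟨_, rfl⟩
  rw [hd] at h2 hL ⊢
  induction d, h2 using Nat.le_induction generalizing L with
  | base => exact hopfDim_le_two hπ hL hd
  | succ d hd2 ih =>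
    have hne : lowerCentralSeries K L L 1 ≠ ⊥ := by
      rw [Ne, ← LieSubmodule.toSubmodule_eq_bot, ← finrank_eq_zero]
      omega
    obtain ⟨z, hz1, hz, hz0⟩ := exists_mem_lowerCentralSeries_one_mem_center_ne_zero hne
    set Z := centralLine z hz
    have : LieRing.IsNilpotent (L ⧸ Z) := (LieIdeal.mkQ_surjective Z).lieAlgebra_isNilpotent
    have hZ : finrank K Z.toSubmodule = 1 := finrank_span_singleton hz0
    have hZ1 : Z ≤ lowerCentralSeries K L L 1 := fun w hw => by
      obtain ⟨c, rfl⟩ := mem_span_singleton.mp hw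
      exact (lowerCentralSeries K L L 1).smul_mem c hz1
    have hdq := finrank_lowerCentralSeries_one_quotient_add hZ1
    have hLq : finrank K (L ⧸ Z) + finrank K Z.toSubmodule = finrank K L :=
      Submodule.finrank_quotient_add_finrank Z.toSubmodule
    have hLL := (lowerCentralSeries K L L 1).toSubmodule.finrank_quotient_add_finrank
    have hstep : hopfDim π ≤ hopfDim ((LieIdeal.mkQ Z).comp π) +
        finrank K (L ⧸ (lowerCentralSeries K L L 1).toSubmodule) - 1 :=
      hopfDim_le_hopfDim_comp_centralLine hπ hz hz1 hz0
    have ih' := ih (L := L ⧸ Z) (π := (LieIdeal.mkQ Z).comp π)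
      ((LieIdeal.mkQ_surjective Z).comp hπ) (by omega) (by omega)
    omega

end Hopf

theorem no_attaining_bound_of_derived_codim_two (K L : Type) [Field K] [LieRing L]
    [LieAlgebra K L] [FiniteDimensional K L] (n c : ℕ) (hn4 : 4 ≤ n)
    (hn : Module.finrank K L = n) (hm : lieDerivedDim K L = n - 2)
    (hc : lieNilpotencyClass K L c)
    (hM : ∃ (X : Type) (π : FreeLieAlgebra K X →ₗ⁅K⁆ L), Function.Surjective π ∧
      lieSchurMultiplierDim K X π = n - 1) :
    False := by
  obtain ⟨X, π, hπ, hdim⟩ := hM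
  have : LieRing.IsNilpotent L := (LieModule.isNilpotent_iff K L L).mpr ⟨c, hc.1⟩
  change finrank K (lowerCentralSeries K L L 1).toSubmodule = n - 2 at hm
  have hbound := hopfDim_le_finrank_lowerCentralSeries_one hπ (by omega) (by omega)
  rw [← lieSchurMultiplierDim_eq_hopfDim, hdim, hm] at hbound
  omega
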